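/- Let l ≥ 1 be an integer, δ ∈ k, and H̃ = X^{l+1} + δ·X^{2l+1}. (a) For every c ∈ k there exists a unique Φ ∈ k⟦X⟧ with constant coefficient 0, coefficient of X equal to 1, and coefficient of X^{l+1} equal to c, such that H̃∘Φ = Φ′·H̃. (b) Any such solution Φ has coefficient of X^j equal to 0 for every j ≥ 2 with j ≢ 1 (mod l). (c) If Φ₁ and Φ₂ are two such solutions with coefficients c and c′ of X^{l+1} respectively, then Φ₁∘Φ₂ = Φ₂∘Φ₁ and the coefficient of X^{l+1} in Φ₁∘Φ₂ equals c + c′; hence this solution group is isomorphic to the additive group (k, +). -/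

import Mathlib

/-!
Let `D(Φ) = H̃(Φ) - Φ′·H̃`. For `Φ = X + O(X²)` the coefficient of `X^(n+l)` in `D(Φ)` depends only
on the coefficients `Φ_j` with `j ≤ n`, and on `Φ_n` only through the term `(l + 1 - n)·Φ_n`, which
comes from `Φ^(l+1)` and from `Φ′·X^(l+1)`. Hence a solution is determined coefficient by
coefficient, except at the resonant exponent `n = l + 1`: there `Φ_(l+1)` is free, and the
solvability condition holds because `X` itself is a solution. This gives (a).

If `ζ` is a primitive `l`-th root of unity (in an extension of `k`), then `H̃(ζX) = ζ·H̃(X)`, so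
`ζ⁻¹·Φ(ζX)` is again a solution with the same coefficient of `X^(l+1)`. By uniqueness it is `Φ`,
which kills every `Φ_j` with `ζ^(j-1) ≠ 1`: this is (b).

By the chain rule solutions are closed under composition, and by (b)
`Φ₁ = X + c₁X^(l+1) + O(X^(l+2))`, so the coefficients of `X^(l+1)` add. Uniqueness then makes
composition commutative: this is (c).
-/

open PowerSeries

variable {k : Type*} [Field k] [CharZero k]

/-- Substitution of `g` (with zero constant coefficient) into `f`. -/
noncomputable def comp (f g : PowerSeries k) : PowerSeries k :=
  PowerSeries.mk fun m => ∑ n ∈ Finset.range (m + 1),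
    PowerSeries.coeff n f * PowerSeries.coeff m (g ^ n)

/-- The normal form generator. -/
noncomputable def Htilde (l : ℕ) (δ : k) : PowerSeries k :=
  X ^ (l + 1) + C δ * X ^ (2 * l + 1)

lemma mul_geom_sum₂_succ {R : Type*} [CommRing R] (x y : R) (m : ℕ) :
    (x - y) * ∑ i ∈ Finset.range (m + 1), x ^ i * y ^ (m - i) = x ^ (m + 1) - y ^ (m + 1) := by
  simpa using (Commute.all x y).mul_geom_sum₂ (m + 1)

namespace PowerSeries

variable {R : Type*} [CommRing R]

lemma coeff_eq_of_X_pow_dvd_sub {f g : R⟦X⟧} {n j : ℕ} (h : X ^ n ∣ f - g) (hj : j < n) :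
    coeff j f = coeff j g :=
  sub_eq_zero.mp (by rw [← map_sub]; exact X_pow_dvd_iff.mp h j hj)

lemma coeff_add_mul_of_X_pow_dvd {f g : R⟦X⟧} {p q : ℕ} (hf : X ^ p ∣ f) (hg : X ^ q ∣ g) :
    coeff (p + q) (f * g) = coeff p f * coeff q g := by
  obtain ⟨f, rfl⟩ := hf
  obtain ⟨g, rfl⟩ := hg
  rw [mul_mul_mul_comm, ← pow_add]
  simp [coeff_X_pow_mul']

lemma coeff_pow_self_of_X_dvd {f : R⟦X⟧} (hf : X ∣ f) (n : ℕ) :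
    coeff n (f ^ n) = coeff 1 f ^ n := by
  induction n with
  | zero => simp
  | succ n ih =>
    rw [pow_succ, coeff_add_mul_of_X_pow_dvd (pow_dvd_pow_of_dvd hf n) (q := 1) (by rwa [pow_one]),
      ih, pow_succ]

lemma X_pow_dvd_derivative {f : R⟦X⟧} {n : ℕ} (hf : X ^ (n + 1) ∣ f) : X ^ n ∣ d⁄dX R f :=
  X_pow_dvd_iff.mpr fun j hj ↦ by
    rw [coeff_derivative, X_pow_dvd_iff.mp hf (j + 1) (by omega), zero_mul]

lemma rescale_C (s a : R) : rescale s (C a) = C a := by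
  ext n
  rcases n with _ | n <;> simp [coeff_rescale, coeff_C]

lemma derivative_rescale (s : R) (f : R⟦X⟧) :
    d⁄dX R (rescale s f) = C s * rescale s (d⁄dX R f) := by
  ext n
  simp [coeff_derivative, coeff_rescale, pow_succ]
  ring

lemma derivative_map {S : Type*} [CommRing S] (σ : R →+* S) (f : R⟦X⟧) :
    d⁄dX S (map σ f) = map σ (d⁄dX R f) := by
  ext n
  simp [coeff_derivative]

section PowSubPow

variable {Φ Ψ : R⟦X⟧}

lemma X_pow_dvd_pow_mul_pow (hΦ : X ∣ Φ) (hΨ : X ∣ Ψ) (i j : ℕ) :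
    X ^ (i + j) ∣ Φ ^ i * Ψ ^ j :=
  pow_add (X : R⟦X⟧) i j ▸ mul_dvd_mul (pow_dvd_pow_of_dvd hΦ i) (pow_dvd_pow_of_dvd hΨ j)

lemma coeff_pow_mul_pow_of_X_dvd (hΦ : X ∣ Φ) (hΨ : X ∣ Ψ) (i j : ℕ) :
    coeff (i + j) (Φ ^ i * Ψ ^ j) = coeff 1 Φ ^ i * coeff 1 Ψ ^ j := by
  rw [coeff_add_mul_of_X_pow_dvd (pow_dvd_pow_of_dvd hΦ i) (pow_dvd_pow_of_dvd hΨ j),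
    coeff_pow_self_of_X_dvd hΦ, coeff_pow_self_of_X_dvd hΨ]

lemma X_pow_dvd_geom_sum₂ (hΦ : X ∣ Φ) (hΨ : X ∣ Ψ) (m : ℕ) :
    X ^ m ∣ ∑ i ∈ Finset.range (m + 1), Φ ^ i * Ψ ^ (m - i) :=
  Finset.dvd_sum fun i hi ↦ by
    simpa [Nat.add_sub_cancel' (Finset.mem_range_succ_iff.mp hi)] using
      X_pow_dvd_pow_mul_pow hΦ hΨ i (m - i)

lemma coeff_geom_sum₂ (hΦ : X ∣ Φ) (hΨ : X ∣ Ψ) (hΦ1 : coeff 1 Φ = 1) (hΨ1 : coeff 1 Ψ = 1)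
    (m : ℕ) : coeff m (∑ i ∈ Finset.range (m + 1), Φ ^ i * Ψ ^ (m - i)) = m + 1 := by
  have hterm (i) (hi : i ∈ Finset.range (m + 1)) : coeff m (Φ ^ i * Ψ ^ (m - i)) = 1 := by
    simpa [hΦ1, hΨ1, Nat.add_sub_cancel' (Finset.mem_range_succ_iff.mp hi)] using
      coeff_pow_mul_pow_of_X_dvd hΦ hΨ i (m - i)
  simp [map_sum, Finset.sum_congr rfl hterm]

lemma X_pow_dvd_pow_sub_pow (hΦ : X ∣ Φ) (hΨ : X ∣ Ψ) {n : ℕ} (h : X ^ n ∣ Φ - Ψ) (m : ℕ) :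
    X ^ (n + m) ∣ Φ ^ (m + 1) - Ψ ^ (m + 1) := by
  rw [← mul_geom_sum₂_succ, pow_add]
  exact mul_dvd_mul h (X_pow_dvd_geom_sum₂ hΦ hΨ m)

lemma coeff_pow_sub_pow (hΦ : X ∣ Φ) (hΨ : X ∣ Ψ) (hΦ1 : coeff 1 Φ = 1) (hΨ1 : coeff 1 Ψ = 1)
    {n : ℕ} (h : X ^ n ∣ Φ - Ψ) (m : ℕ) :
    coeff (n + m) (Φ ^ (m + 1) - Ψ ^ (m + 1)) = (m + 1) * coeff n (Φ - Ψ) := by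
  rw [← mul_geom_sum₂_succ, coeff_add_mul_of_X_pow_dvd h (X_pow_dvd_geom_sum₂ hΦ hΨ m),
    coeff_geom_sum₂ hΦ hΨ hΦ1 hΨ1, mul_comm]

end PowSubPow

end PowerSeries

lemma Nat.not_modEq_one_of_le {j l : ℕ} (h2 : 2 ≤ j) (hj : j ≤ l) : ¬ j ≡ 1 [MOD l] := fun h ↦ by
  have := Nat.eq_zero_of_dvd_of_lt ((Nat.modEq_iff_dvd' (by omega)).mp h.symm) (by omega)
  omega

section Defect

variable {K : Type*} [Field K]

lemma comp_eq_subst {f g : K⟦X⟧} (hg : constantCoeff g = 0) : comp f g = f.subst g := by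
  ext m
  rw [coeff_subst' (HasSubst.of_constantCoeff_zero' hg),
    finsum_eq_sum_of_support_subset (s := Finset.range (m + 1))]
  · simp [comp]
  · intro d hd
    rw [Finset.coe_range, Set.mem_Iio]
    by_contra! hdm
    exact hd (by simp [X_pow_dvd_iff.mp (pow_dvd_pow_of_dvd (X_dvd_iff.mpr hg) d) m hdm])

lemma Htilde_eq_X_pow_mul (l : ℕ) (δ : K) : Htilde l δ = X ^ (l + 1) * (1 + C δ * X ^ l) := by
  rw [Htilde]; ring

lemma subst_Htilde {Φ : K⟦X⟧} (hΦ : constantCoeff Φ = 0) (l : ℕ) (δ : K) :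
    (Htilde l δ).subst Φ = Φ ^ (l + 1) + C δ * Φ ^ (2 * l + 1) := by
  have hs := HasSubst.of_constantCoeff_zero' hΦ
  rw [Htilde, subst_add hs, subst_mul hs, subst_pow hs, subst_pow hs, subst_X hs, subst_C]
  rfl

lemma rescale_Htilde {l : ℕ} {s : K} (hs : s ^ l = 1) (δ : K) :
    rescale s (Htilde l δ) = C s * Htilde l δ := by
  have h1 : s ^ (l + 1) = s := by rw [pow_succ, hs, one_mul]
  have h2 : s ^ (2 * l + 1) = s := by rw [pow_succ, pow_mul', hs, one_pow, one_mul]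
  rw [Htilde, map_add, map_mul, map_pow, map_pow, rescale_X, rescale_C, mul_pow, mul_pow, ← map_pow,
    ← map_pow, h1, h2]
  ring

/-- `H̃ ∘ Φ - Φ′ · H̃`, with `H̃ ∘ Φ` expanded so that it makes sense for every `Φ`. -/
noncomputable def ajDefect (l : ℕ) (δ : K) (Φ : K⟦X⟧) : K⟦X⟧ :=
  Φ ^ (l + 1) + C δ * Φ ^ (2 * l + 1) - d⁄dX K Φ * Htilde l δ

lemma ajDefect_eq_zero_iff {Φ : K⟦X⟧} (hΦ : constantCoeff Φ = 0) (l : ℕ) (δ : K) :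
    ajDefect l δ Φ = 0 ↔ (Htilde l δ).subst Φ = d⁄dX K Φ * Htilde l δ := by
  rw [ajDefect, sub_eq_zero, subst_Htilde hΦ]

lemma ajDefect_X (l : ℕ) (δ : K) : ajDefect l δ X = 0 := by
  rw [ajDefect, derivative_X, Htilde]; ring

lemma map_ajDefect {L : Type*} [Field L] (σ : K →+* L) (l : ℕ) (δ : K) (Φ : K⟦X⟧) :
    map σ (ajDefect l δ Φ) = ajDefect l (σ δ) (map σ Φ) := by
  simp [ajDefect, Htilde, derivative_map]

lemma ajDefect_C_inv_mul_rescale {l : ℕ} {s : K} (hs : s ^ l = 1) (hs0 : s ≠ 0) (δ : K)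
    (Φ : K⟦X⟧) : ajDefect l δ (C s⁻¹ * rescale s Φ) = C s⁻¹ * rescale s (ajDefect l δ Φ) := by
  have h1 : (C s⁻¹ : K⟦X⟧) ^ (l + 1) = C s⁻¹ := by
    rw [← map_pow, pow_succ, inv_pow, hs, inv_one, one_mul]
  have h2 : (C s⁻¹ : K⟦X⟧) ^ (2 * l + 1) = C s⁻¹ := by
    rw [← map_pow, pow_succ, pow_mul', inv_pow, hs, inv_one, one_pow, one_mul]
  have hC : C s⁻¹ * C s = (1 : K⟦X⟧) := by rw [← map_mul, inv_mul_cancel₀ hs0, map_one]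
  have hD : d⁄dX K (C s⁻¹ * rescale s Φ) = rescale s (d⁄dX K Φ) := by
    rw [← smul_eq_C_mul, Derivation.map_smul, derivative_rescale, smul_eq_C_mul, ← mul_assoc,
      hC, one_mul]
  rw [ajDefect, ajDefect, hD, mul_pow, mul_pow, h1, h2]
  simp only [map_sub, map_add, map_mul, map_pow, rescale_C, rescale_Htilde hs]
  linear_combination (rescale s (d⁄dX K Φ) * Htilde l δ) * hC

lemma ajDefect_sub_ajDefect (l : ℕ) (δ : K) (Φ Ψ : K⟦X⟧) :
    ajDefect l δ Φ - ajDefect l δ Ψ = (Φ ^ (l + 1) - Ψ ^ (l + 1))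
      + C δ * (Φ ^ (2 * l + 1) - Ψ ^ (2 * l + 1)) - d⁄dX K (Φ - Ψ) * Htilde l δ := by
  rw [ajDefect, ajDefect, map_sub]; ring

lemma X_pow_dvd_derivative_mul_Htilde {D : K⟦X⟧} {n : ℕ} (h : X ^ (n + 1) ∣ D) (l : ℕ)
    (δ : K) : X ^ (n + 1 + l) ∣ d⁄dX K D * Htilde l δ := by
  rw [Htilde_eq_X_pow_mul, show n + 1 + l = n + (l + 1) by ring, pow_add]
  exact mul_dvd_mul (X_pow_dvd_derivative h) (dvd_mul_right _ _)

lemma coeff_derivative_mul_Htilde {D : K⟦X⟧} {n : ℕ} (h : X ^ (n + 1) ∣ D) {l : ℕ} (hl : 1 ≤ l)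
    (δ : K) : coeff (n + 1 + l) (d⁄dX K D * Htilde l δ) = (n + 1) * coeff (n + 1) D := by
  rw [Htilde_eq_X_pow_mul, show n + 1 + l = n + (l + 1) by ring,
    coeff_add_mul_of_X_pow_dvd (X_pow_dvd_derivative h) (dvd_mul_right _ _)]
  simp [coeff_derivative, coeff_X_pow_mul', show l ≠ 0 by omega, mul_comm]

lemma X_pow_dvd_ajDefect_sub {Φ Ψ : K⟦X⟧} (hΦ : constantCoeff Φ = 0) (hΨ : constantCoeff Ψ = 0)
    {n : ℕ} (hn : 1 ≤ n) (h : X ^ n ∣ Φ - Ψ) (l : ℕ) (δ : K) :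
    X ^ (n + l) ∣ ajDefect l δ Φ - ajDefect l δ Ψ := by
  obtain ⟨n, rfl⟩ : ∃ m, n = m + 1 := ⟨n - 1, by omega⟩
  have hΦX := X_dvd_iff.mpr hΦ
  have hΨX := X_dvd_iff.mpr hΨ
  have hδ : X ^ (n + 1 + l) ∣ Φ ^ (2 * l + 1) - Ψ ^ (2 * l + 1) :=
    (pow_dvd_pow X (by omega)).trans (X_pow_dvd_pow_sub_pow hΦX hΨX h (2 * l))
  rw [ajDefect_sub_ajDefect]
  exact dvd_sub (dvd_add (X_pow_dvd_pow_sub_pow hΦX hΨX h l) (dvd_mul_of_dvd_right hδ _))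
    (X_pow_dvd_derivative_mul_Htilde h l δ)

lemma coeff_ajDefect_sub {Φ Ψ : K⟦X⟧} (hΦ0 : constantCoeff Φ = 0) (hΦ1 : coeff 1 Φ = 1)
    (hΨ0 : constantCoeff Ψ = 0) (hΨ1 : coeff 1 Ψ = 1) {n : ℕ} (hn : 1 ≤ n) (h : X ^ n ∣ Φ - Ψ)
    {l : ℕ} (hl : 1 ≤ l) (δ : K) :
    coeff (n + l) (ajDefect l δ Φ - ajDefect l δ Ψ) = (l + 1 - n) * coeff n (Φ - Ψ) := by
  obtain ⟨n, rfl⟩ : ∃ m, n = m + 1 := ⟨n - 1, by omega⟩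
  have hΦX := X_dvd_iff.mpr hΦ0
  have hΨX := X_dvd_iff.mpr hΨ0
  have hδ : coeff (n + 1 + l) (Φ ^ (2 * l + 1) - Ψ ^ (2 * l + 1)) = 0 :=
    X_pow_dvd_iff.mp (X_pow_dvd_pow_sub_pow hΦX hΨX h (2 * l)) _ (by omega)
  rw [ajDefect_sub_ajDefect, map_sub, map_add, coeff_C_mul, hδ,
    coeff_pow_sub_pow hΦX hΨX hΦ1 hΨ1 h, coeff_derivative_mul_Htilde h hl]
  push_cast
  ring

end Defect

/-- Normalized solutions `Φ = X + O(X²)` of the Aczél–Jabotinsky equation `H̃ ∘ Φ = Φ′ · H̃`. -/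
structure IsAJSolution {K : Type*} [Field K] (l : ℕ) (δ : K) (Φ : K⟦X⟧) : Prop where
  constantCoeff_eq : constantCoeff Φ = 0
  coeff_one : coeff 1 Φ = 1
  ajDefect_eq : ajDefect l δ Φ = 0

set_option linter.deprecated false in
lemma isAJSolution_iff_comp {K : Type*} [Field K] {Φ : K⟦X⟧} {l : ℕ} {δ : K} :
    IsAJSolution l δ Φ ↔ constantCoeff Φ = 0 ∧ coeff 1 Φ = 1 ∧
      comp (Htilde l δ) Φ = derivativeFun Φ * Htilde l δ := by
  refine ⟨fun ⟨h0, h1, h⟩ ↦ ⟨h0, h1, ?_⟩, fun ⟨h0, h1, h⟩ ↦ ⟨h0, h1, ?_⟩⟩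
  · rw [comp_eq_subst h0, (ajDefect_eq_zero_iff h0 l δ).mp h]
    rfl
  · rw [ajDefect_eq_zero_iff h0, ← comp_eq_subst h0, h]
    rfl

namespace IsAJSolution

variable {K : Type*} [Field K] {l : ℕ} {δ : K} {Φ Ψ : K⟦X⟧}

lemma eq_of_coeff_succ_eq [CharZero K] (hl : 1 ≤ l) (hΦ : IsAJSolution l δ Φ)
    (hΨ : IsAJSolution l δ Ψ) (hc : coeff (l + 1) Φ = coeff (l + 1) Ψ) : Φ = Ψ := by
  ext n
  induction n using Nat.strong_induction_on with
  | _ n ih =>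
  obtain hn | hn := lt_or_ge n 2
  · interval_cases n
    · simp only [coeff_zero_eq_constantCoeff_apply, hΦ.constantCoeff_eq, hΨ.constantCoeff_eq]
    · rw [hΦ.coeff_one, hΨ.coeff_one]
  obtain rfl | hnl := eq_or_ne n (l + 1)
  · exact hc
  have hdvd : X ^ n ∣ Φ - Ψ := X_pow_dvd_iff.mpr fun j hj ↦ by rw [map_sub, ih j hj, sub_self]
  have key := coeff_ajDefect_sub hΦ.constantCoeff_eq hΦ.coeff_one hΨ.constantCoeff_eq
    hΨ.coeff_one (by omega) hdvd hl δ
  rw [hΦ.ajDefect_eq, hΨ.ajDefect_eq, sub_zero, map_zero, map_sub, eq_comm, mul_eq_zero] at key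
  refine sub_eq_zero.mp <| key.resolve_left fun h ↦ hnl ?_
  exact_mod_cast (sub_eq_zero.mp h).symm

lemma map {L : Type*} [Field L] (hΦ : IsAJSolution l δ Φ) (σ : K →+* L) :
    IsAJSolution l (σ δ) (map σ Φ) where
  constantCoeff_eq := by
    rw [← coeff_zero_eq_constantCoeff_apply, coeff_map, coeff_zero_eq_constantCoeff_apply,
      hΦ.constantCoeff_eq, map_zero]
  coeff_one := by rw [coeff_map, hΦ.coeff_one, map_one]
  ajDefect_eq := by rw [← map_ajDefect, hΦ.ajDefect_eq, map_zero]

lemma C_inv_mul_rescale (hΦ : IsAJSolution l δ Φ) {s : K} (hs : s ^ l = 1) (hs0 : s ≠ 0) :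
    IsAJSolution l δ (C s⁻¹ * rescale s Φ) where
  constantCoeff_eq := by
    rw [← coeff_zero_eq_constantCoeff_apply, coeff_C_mul, coeff_rescale,
      coeff_zero_eq_constantCoeff_apply, hΦ.constantCoeff_eq, mul_zero, mul_zero]
  coeff_one := by
    rw [coeff_C_mul, coeff_rescale, hΦ.coeff_one, pow_one, mul_one, inv_mul_cancel₀ hs0]
  ajDefect_eq := by rw [ajDefect_C_inv_mul_rescale hs hs0, hΦ.ajDefect_eq, map_zero, mul_zero]

lemma coeff_eq_zero_of_isPrimitiveRoot [CharZero K] (hl : 1 ≤ l) (hΦ : IsAJSolution l δ Φ)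
    {ζ : K} (hζ : IsPrimitiveRoot ζ l) {j : ℕ} (hj : ¬ j ≡ 1 [MOD l]) : coeff j Φ = 0 := by
  have hζ0 : ζ ≠ 0 := hζ.ne_zero (by omega)
  have hζj : ζ ^ j ≠ ζ ^ 1 := by
    rwa [ne_eq, (hζ.isOfFinOrder (by omega)).pow_eq_pow_iff_modEq, ← hζ.eq_orderOf]
  have hcoeff (n : ℕ) : coeff n (C ζ⁻¹ * rescale ζ Φ) = ζ⁻¹ * ζ ^ n * coeff n Φ := by
    rw [coeff_C_mul, coeff_rescale, mul_assoc]
  have h := congrArg (coeff j) <| (hΦ.C_inv_mul_rescale hζ.pow_eq_one hζ0).eq_of_coeff_succ_eq hl hΦ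
    (by rw [hcoeff, pow_succ, hζ.pow_eq_one, one_mul, inv_mul_cancel₀ hζ0, one_mul])
  rw [hcoeff] at h
  refine (mul_eq_zero.mp (?_ : (ζ ^ j - ζ) * coeff j Φ = 0)).resolve_left
    (sub_ne_zero.mpr (by rwa [pow_one] at hζj))
  linear_combination ζ * h - ζ ^ j * coeff j Φ * mul_inv_cancel₀ hζ0

lemma coeff_eq_zero_of_not_modEq [CharZero K] (hl : 1 ≤ l) (hΦ : IsAJSolution l δ Φ) {j : ℕ}
    (hj : ¬ j ≡ 1 [MOD l]) : coeff j Φ = 0 := by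
  have : NeZero (l : K) := ⟨by exact_mod_cast (show l ≠ 0 by omega)⟩
  let σ := algebraMap K (CyclotomicField l K)
  obtain ⟨ζ, hζ⟩ := IsCyclotomicExtension.exists_isPrimitiveRoot K (CyclotomicField l K)
    (Set.mem_singleton l) (by omega)
  apply σ.injective
  rw [map_zero, ← coeff_map]
  exact (hΦ.map σ).coeff_eq_zero_of_isPrimitiveRoot hl hζ hj

lemma X_pow_dvd_sub [CharZero K] (hl : 1 ≤ l) (hΦ : IsAJSolution l δ Φ) :
    X ^ (l + 2) ∣ Φ - (X + C (coeff (l + 1) Φ) * X ^ (l + 1)) := by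
  refine X_pow_dvd_iff.mpr fun j hj ↦ ?_
  obtain hj2 | hj2 := lt_or_ge j 2
  · interval_cases j <;>
      simp [coeff_X_pow, hΦ.constantCoeff_eq, hΦ.coeff_one, show l ≠ 0 by omega]
  obtain rfl | hjl := eq_or_ne j (l + 1)
  · simp [coeff_X, show l ≠ 0 by omega]
  rw [map_sub, hΦ.coeff_eq_zero_of_not_modEq hl (Nat.not_modEq_one_of_le hj2 (by omega))]
  simp [coeff_X, coeff_X_pow, hjl, show j ≠ 1 by omega]

lemma subst (hΦ : IsAJSolution l δ Φ) (hΨ : IsAJSolution l δ Ψ) :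
    IsAJSolution l δ (Φ.subst Ψ) where
  constantCoeff_eq := constantCoeff_subst_eq_zero hΨ.constantCoeff_eq Φ hΦ.constantCoeff_eq
  coeff_one := by
    rw [← comp_eq_subst hΨ.constantCoeff_eq]
    simp [comp, Finset.sum_range_succ, hΦ.coeff_one, hΨ.coeff_one]
  ajDefect_eq := by
    have hsΦ := HasSubst.of_constantCoeff_zero' hΦ.constantCoeff_eq
    have hsΨ := HasSubst.of_constantCoeff_zero' hΨ.constantCoeff_eq
    have hΦ' := (ajDefect_eq_zero_iff hΦ.constantCoeff_eq l δ).mp hΦ.ajDefect_eq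
    have hΨ' := (ajDefect_eq_zero_iff hΨ.constantCoeff_eq l δ).mp hΨ.ajDefect_eq
    rw [ajDefect_eq_zero_iff (constantCoeff_subst_eq_zero hΨ.constantCoeff_eq Φ
      hΦ.constantCoeff_eq), ← subst_comp_subst_apply hsΦ hsΨ, hΦ', subst_mul hsΨ, hΨ',
      derivative_subst hsΨ, mul_assoc]

lemma coeff_succ_subst [CharZero K] (hl : 1 ≤ l) (hΦ : IsAJSolution l δ Φ)
    (hΨ : IsAJSolution l δ Ψ) :
    coeff (l + 1) (Φ.subst Ψ) = coeff (l + 1) Φ + coeff (l + 1) Ψ := by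
  have hs := HasSubst.of_constantCoeff_zero' hΨ.constantCoeff_eq
  have hX := X_dvd_iff.mpr hΨ.constantCoeff_eq
  obtain ⟨h, hh⟩ := hΦ.X_pow_dvd_sub hl
  rw [sub_eq_iff_eq_add'] at hh
  set c := coeff (l + 1) Φ
  have hC : (C c : K⟦X⟧).subst Ψ = C c := subst_C c
  have hrem : coeff (l + 1) (Ψ ^ (l + 2) * h.subst Ψ) = 0 :=
    X_pow_dvd_iff.mp (dvd_mul_of_dvd_left (pow_dvd_pow_of_dvd hX _) _) _ (by omega)
  rw [hh, subst_add hs, subst_add hs, subst_mul hs, subst_mul hs, subst_pow hs, subst_pow hs,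
    subst_X hs, hC, map_add, map_add, hrem, coeff_C_mul, coeff_pow_self_of_X_dvd hX, hΨ.coeff_one]
  ring

end IsAJSolution

section Existence

variable {K : Type*} [Field K] (l : ℕ) (δ c : K)

noncomputable def ajNextCoeff (P : K⟦X⟧) (n : ℕ) : K :=
  if n = 0 then 0 else if n = 1 then 1 else if n = l + 1 then c
  else coeff (n + l) (ajDefect l δ P) / (n - (l + 1))

noncomputable def ajApprox : ℕ → Polynomial K
  | 0 => 0
  | n + 1 => ajApprox n + Polynomial.monomial n (ajNextCoeff l δ c (ajApprox n) n)

/-- The coefficient of `X^n` is chosen to cancel the coefficient of `X^(n+l)` in the defect of the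
truncation below `X^n` (see `coeff_ajDefect_sub`). -/
noncomputable def ajSolution : K⟦X⟧ :=
  mk fun n ↦ ajNextCoeff l δ c (ajApprox l δ c n) n

lemma ajApprox_eq_trunc (n : ℕ) : ajApprox l δ c n = trunc n (ajSolution l δ c) := by
  induction n with
  | zero => rfl
  | succ n ih => rw [ajApprox, trunc_succ, ← ih, ajSolution, coeff_mk]

lemma coeff_ajSolution (n : ℕ) :
    coeff n (ajSolution l δ c) = ajNextCoeff l δ c (trunc n (ajSolution l δ c)) n := by
  rw [← ajApprox_eq_trunc]
  exact coeff_mk _ _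

variable {l}

lemma constantCoeff_ajSolution : constantCoeff (ajSolution l δ c) = 0 := by
  rw [← coeff_zero_eq_constantCoeff_apply, coeff_ajSolution, ajNextCoeff, if_pos rfl]

lemma coeff_one_ajSolution : coeff 1 (ajSolution l δ c) = 1 := by
  rw [coeff_ajSolution, ajNextCoeff, if_neg one_ne_zero, if_pos rfl]

lemma coeff_succ_ajSolution (hl : 1 ≤ l) : coeff (l + 1) (ajSolution l δ c) = c := by
  rw [coeff_ajSolution, ajNextCoeff, if_neg (by omega), if_neg (by omega), if_pos rfl]

lemma coeff_ajSolution_of_ne {n : ℕ} (h0 : n ≠ 0) (h1 : n ≠ 1) (hl : n ≠ l + 1) :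
    coeff n (ajSolution l δ c) =
      coeff (n + l) (ajDefect l δ (trunc n (ajSolution l δ c))) / (n - (l + 1)) := by
  rw [coeff_ajSolution, ajNextCoeff, if_neg h0, if_neg h1, if_neg hl]

lemma X_sq_dvd_ajSolution_sub_X : X ^ 2 ∣ ajSolution l δ c - X :=
  X_pow_dvd_iff.mpr fun j hj ↦ by
    interval_cases j <;> simp [constantCoeff_ajSolution, coeff_one_ajSolution]

lemma trunc_ajSolution_eq_X {n : ℕ} (h2 : 2 ≤ n) (hn : n ≤ l + 1) :
    (trunc n (ajSolution l δ c) : K⟦X⟧) = X := by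
  induction n, h2 using Nat.le_induction with
  | base =>
    ext j
    obtain hj | hj := lt_or_ge j 2
    · interval_cases j <;> simp [coeff_trunc, constantCoeff_ajSolution, coeff_one_ajSolution]
    · simp [coeff_trunc, coeff_X, show ¬ j < 2 by omega, show j ≠ 1 by omega]
  | succ n h2 ih =>
    rw [trunc_succ, Polynomial.coe_add, ih (by omega),
      coeff_ajSolution_of_ne δ c (by omega) (by omega) (by omega), ih (by omega), ajDefect_X]
    simp

lemma ajDefect_ajSolution [CharZero K] (hl : 1 ≤ l) : ajDefect l δ (ajSolution l δ c) = 0 := by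
  set Φ := ajSolution l δ c
  have hΦ0 : constantCoeff Φ = 0 := constantCoeff_ajSolution δ c
  have hΦ1 : coeff 1 Φ = 1 := coeff_one_ajSolution δ c
  ext m
  rw [map_zero]
  obtain hm | ⟨n, hn, rfl⟩ : m < 2 + l ∨ ∃ n, 2 ≤ n ∧ m = n + l :=
    (lt_or_ge m (2 + l)).imp_right fun hm ↦ ⟨m - l, by omega, by omega⟩
  · have h := X_pow_dvd_ajDefect_sub hΦ0 constantCoeff_X (by norm_num)
      (X_sq_dvd_ajSolution_sub_X δ c) l δ
    rw [ajDefect_X, sub_zero] at h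
    exact X_pow_dvd_iff.mp h m hm
  set T : K⟦X⟧ := ↑(trunc n Φ)
  have hT : X ^ n ∣ Φ - T := X_pow_dvd_iff.mpr fun j hj ↦ by simp [T, coeff_trunc, hj]
  have hT0 : constantCoeff T = 0 := by
    rw [← coeff_zero_eq_constantCoeff_apply, ← coeff_eq_of_X_pow_dvd_sub hT (by omega),
      coeff_zero_eq_constantCoeff_apply, hΦ0]
  have hT1 : coeff 1 T = 1 := (coeff_eq_of_X_pow_dvd_sub hT (by omega)).symm.trans hΦ1
  have key := coeff_ajDefect_sub hΦ0 hΦ1 hT0 hT1 (by omega) hT hl δ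
  rw [map_sub, map_sub, show coeff n T = 0 by simp [T, coeff_trunc], sub_zero] at key
  obtain rfl | hnl := eq_or_ne n (l + 1)
  · have hTX : T = X := trunc_ajSolution_eq_X δ c (by omega) le_rfl
    rw [hTX, ajDefect_X] at key
    simpa using key
  · have hcoeff : coeff n Φ = coeff (n + l) (ajDefect l δ T) / (n - (l + 1)) :=
      coeff_ajSolution_of_ne δ c (by omega) (by omega) hnl
    have hne : (n : K) - (l + 1) ≠ 0 := sub_ne_zero.mpr (by exact_mod_cast hnl)
    rw [hcoeff, show (l : K) + 1 - n = -(n - (l + 1)) by ring, neg_mul, mul_div_cancel₀ _ hne]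
      at key
    linear_combination key

lemma isAJSolution_ajSolution [CharZero K] (hl : 1 ≤ l) : IsAJSolution l δ (ajSolution l δ c) :=
  ⟨constantCoeff_ajSolution δ c, coeff_one_ajSolution δ c, ajDefect_ajSolution δ c hl⟩

end Existence

/-- For `H̃ = X^(l+1) + δX^(2l+1)`:
(a) for every `c` there is a unique solution `Φ = X + cX^(l+1) + …` of
`H̃∘Φ = Φ′·H̃`;
(b) all coefficients of such a solution at exponents `j ≥ 2` with
`j ≢ 1 (mod l)` vanish;
(c) any two such solutions commute and the coefficient of `X^(l+1)` is additive
under composition, so this solution group is isomorphic to `(k, +)`. -/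
theorem aczel_jabotinsky_normalized_solution_group (l : ℕ) (hl : 1 ≤ l) (δ : k) :
    (∀ c : k, ∃! Φ : PowerSeries k,
        constantCoeff Φ = 0 ∧ coeff 1 Φ = 1 ∧ coeff (l + 1) Φ = c ∧
        comp (Htilde l δ) Φ = derivativeFun Φ * Htilde l δ) ∧
    (∀ Φ : PowerSeries k,
        constantCoeff Φ = 0 → coeff 1 Φ = 1 →
        comp (Htilde l δ) Φ = derivativeFun Φ * Htilde l δ →
        ∀ j, 2 ≤ j → ¬ j ≡ 1 [MOD l] → coeff j Φ = 0) ∧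
    (∀ Φ₁ Φ₂ : PowerSeries k,
        constantCoeff Φ₁ = 0 → coeff 1 Φ₁ = 1 →
        constantCoeff Φ₂ = 0 → coeff 1 Φ₂ = 1 →
        comp (Htilde l δ) Φ₁ = derivativeFun Φ₁ * Htilde l δ →
        comp (Htilde l δ) Φ₂ = derivativeFun Φ₂ * Htilde l δ →
        comp Φ₁ Φ₂ = comp Φ₂ Φ₁ ∧
          coeff (l + 1) (comp Φ₁ Φ₂)
            = coeff (l + 1) Φ₁ + coeff (l + 1) Φ₂) := by
  refine ⟨fun c ↦ ⟨ajSolution l δ c, ?_, ?_⟩, fun Φ h0 h1 hΦ j _ hj ↦ ?_,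
    fun Φ₁ Φ₂ h₁0 h₁1 h₂0 h₂1 hΦ₁ hΦ₂ ↦ ?_⟩
  · obtain ⟨h0, h1, h⟩ := isAJSolution_iff_comp.mp (isAJSolution_ajSolution δ c hl)
    exact ⟨h0, h1, coeff_succ_ajSolution δ c hl, h⟩
  · rintro Ψ ⟨h0, h1, hc, h⟩
    exact (isAJSolution_iff_comp.mpr ⟨h0, h1, h⟩).eq_of_coeff_succ_eq hl
      (isAJSolution_ajSolution δ c hl) (hc.trans (coeff_succ_ajSolution δ c hl).symm)
  · exact (isAJSolution_iff_comp.mpr ⟨h0, h1, hΦ⟩).coeff_eq_zero_of_not_modEq hl hj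
  · have hs₁ := isAJSolution_iff_comp.mpr ⟨h₁0, h₁1, hΦ₁⟩
    have hs₂ := isAJSolution_iff_comp.mpr ⟨h₂0, h₂1, hΦ₂⟩
    have h₁₂ := hs₁.coeff_succ_subst hl hs₂
    rw [comp_eq_subst h₂0, comp_eq_subst h₁0]
    refine ⟨(hs₁.subst hs₂).eq_of_coeff_succ_eq hl (hs₂.subst hs₁) ?_, h₁₂⟩
    rw [h₁₂, hs₂.coeff_succ_subst hl hs₁, add_comm]
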